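/- For all x ∈ (1, ∞), x^((1-γ)x - 1) < Γ(x) < x^(x-1). -/

import Mathlib

/-!
Upper bound: `Γ ≤ 1` on `[1, 2]` by convexity of `Γ`, while `x ^ (x - 1) > 1` there; the
recursion `Γ x = (x - 1) Γ (x - 1)` carries the strict bound to all `x > 1`.

Lower bound: `F t = log Γ t - ((1 - γ) t - 1) log t` vanishes together with its derivative at
`t = 1` (as `Γ' 1 = -γ`). On `[1, M]`, `F - δ t²` is still convex for a small `δ > 0`: it is the
pointwise limit of the same expression built from Gauss' approximants `logGammaSeq t n`, whose
second derivative is at least `(t + 1)⁻¹ - (1 - γ) t⁻¹ - (t + n + 1)⁻¹ - 2δ` by comparing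
`∑ (t + m)⁻²` with a telescoping sum, and `(t + 1)⁻¹ - (1 - γ) t⁻¹ ≥ (2γ - 1) / (M (M + 1)) > 0`
because `γ > 1/2`. The tangent line at `1` then gives `F x ≥ δ (x - 1)² > 0`.
-/

open Real Filter Set Topology

theorem ConvexOn.of_tendsto {𝕜 E β ι : Type*} [Semiring 𝕜] [PartialOrder 𝕜]
    [AddCommMonoid E] [SMul 𝕜 E] [AddCommMonoid β] [PartialOrder β] [Module 𝕜 β]
    [TopologicalSpace β] [OrderClosedTopology β] [ContinuousAdd β] [ContinuousConstSMul 𝕜 β]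
    {l : Filter ι} [l.NeBot] {s : Set E} {f : ι → E → β} {g : E → β}
    (hs : Convex 𝕜 s) (hf : ∀ᶠ i in l, ConvexOn 𝕜 s (f i))
    (hg : ∀ x ∈ s, Tendsto (f · x) l (𝓝 (g x))) : ConvexOn 𝕜 s g :=
  ⟨hs, fun _x hx _y hy _a _b ha hb hab =>
    le_of_tendsto_of_tendsto (hg _ (hs hx hy ha hb hab))
      (((hg _ hx).const_smul _).add ((hg _ hy).const_smul _))
      (hf.mono fun _i hi => hi.2 hx hy ha hb hab)⟩

theorem sub_inv_le_sum_inv_sq {t : ℝ} (ht : 0 < t) (n : ℕ) :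
    t⁻¹ - (t + n)⁻¹ ≤ ∑ m ∈ Finset.range n, ((t + m) ^ 2)⁻¹ := by
  have htel := Finset.sum_range_sub' (fun m : ℕ => (t + m)⁻¹) n
  simp only [Nat.cast_zero, add_zero] at htel
  rw [← htel]
  refine Finset.sum_le_sum fun m _ => ?_
  have hm : 0 < t + m := by positivity
  push_cast
  rw [inv_sub_inv hm.ne' (by positivity), add_sub_add_left_eq_sub, add_sub_cancel_left, one_div]
  exact inv_anti₀ (by positivity) (by nlinarith)

namespace Real.BohrMollerup

open scoped Nat

theorem hasDerivAt_logGammaSeq {t : ℝ} (ht : 0 < t) (n : ℕ) :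
    HasDerivAt (logGammaSeq · n) (log n - ∑ m ∈ Finset.range (n + 1), (t + m)⁻¹) t := by
  have hlog : ∀ m ∈ Finset.range (n + 1), HasDerivAt (fun t : ℝ => log (t + m)) (t + m)⁻¹ t :=
    fun m _ => by simpa using ((hasDerivAt_id t).add_const (m : ℝ)).log (by positivity)
  unfold logGammaSeq
  simpa using (((hasDerivAt_id t).mul_const (log n)).add_const (log (n ! : ℝ))).fun_sub
    (HasDerivAt.fun_sum hlog)

theorem hasDerivAt_sum_inv_add {t : ℝ} (ht : 0 < t) (n : ℕ) :
    HasDerivAt (fun t : ℝ => ∑ m ∈ Finset.range n, (t + m)⁻¹)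
      (-∑ m ∈ Finset.range n, ((t + m) ^ 2)⁻¹) t := by
  have hinv : ∀ m ∈ Finset.range n, HasDerivAt (fun t : ℝ => (t + m)⁻¹) (-((t + m) ^ 2)⁻¹) t :=
    fun m _ => by
      simpa [neg_div] using ((hasDerivAt_id t).add_const (m : ℝ)).fun_inv (by positivity)
  simpa using HasDerivAt.fun_sum hinv

theorem convexOn_logGammaSeq_sub {s : Set ℝ} (hs : Convex ℝ s) (hs0 : s ⊆ Ioi 0) {a δ : ℝ}
    {n : ℕ} (h : ∀ t ∈ s, a * t⁻¹ + 2 * δ + (t + n + 1)⁻¹ ≤ (t + 1)⁻¹) :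
    ConvexOn ℝ s (fun t => logGammaSeq t n - (a * t - 1) * log t - δ * t ^ 2) := by
  set f' : ℝ → ℝ := fun t =>
    log n - ∑ m ∈ Finset.range (n + 1), (t + m)⁻¹ - (a * log t + a - t⁻¹) - δ * (2 * t)
  set f'' : ℝ → ℝ := fun t =>
    ∑ m ∈ Finset.range (n + 1), ((t + m) ^ 2)⁻¹ - (a * t⁻¹ + (t ^ 2)⁻¹) - δ * 2
  have hf' : ∀ t > 0, HasDerivAt (fun t => logGammaSeq t n - (a * t - 1) * log t - δ * t ^ 2)
      (f' t) t := fun t ht => by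
    have hmul := (((hasDerivAt_id t).const_mul a).sub_const 1).mul (hasDerivAt_log ht.ne')
    refine ((hasDerivAt_logGammaSeq ht n).sub hmul).sub ((hasDerivAt_pow 2 t).const_mul δ)
      |>.congr_deriv ?_
    have hdiv : (a * t - 1) * t⁻¹ = a - t⁻¹ := by field_simp
    simp only [f', id, hdiv]
    ring
  have hf'' : ∀ t > 0, HasDerivAt f' (f'' t) t := fun t ht => by
    refine ((((hasDerivAt_const t (log n)).sub (hasDerivAt_sum_inv_add ht (n + 1))).sub
      ((((hasDerivAt_log ht.ne').const_mul a).add_const a).sub (hasDerivAt_inv ht.ne'))).sub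
      (((hasDerivAt_id t).const_mul 2).const_mul δ)).congr_deriv ?_
    simp only [f'']
    ring
  refine convexOn_of_hasDerivWithinAt2_nonneg hs
    (fun t ht => (hf' t (hs0 ht)).continuousAt.continuousWithinAt)
    (fun t ht => (hf' t (hs0 (interior_subset ht))).hasDerivWithinAt)
    (fun t ht => (hf'' t (hs0 (interior_subset ht))).hasDerivWithinAt) fun t ht => ?_
  have ht := interior_subset ht
  have ht0 : 0 < t := hs0 ht
  have htel := sub_inv_le_sum_inv_sq (t := t + 1) (by positivity) n
  simp only [add_right_comm t 1] at htel
  have hbound := h t ht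
  simp only [f'', Finset.sum_range_succ', Nat.cast_succ, Nat.cast_zero, add_zero, ← add_assoc]
  linarith

theorem convexOn_log_Gamma_sub {a δ M : ℝ} (ha : a ≤ 1 / 2)
    (hδ : 2 * δ < (1 - 2 * a) / (M * (M + 1))) :
    ConvexOn ℝ (Icc 1 M) (fun t => log (Gamma t) - (a * t - 1) * log t - δ * t ^ 2) := by
  have hε : 0 < (1 - 2 * a) / (M * (M + 1)) - 2 * δ := sub_pos.2 hδ
  refine ConvexOn.of_tendsto (convex_Icc 1 M) ?_ fun t ht =>
    ((tendsto_log_gamma (one_pos.trans_le ht.1)).sub_const _).sub_const _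
  filter_upwards [tendsto_one_div_add_atTop_nhds_zero_nat.eventually (gt_mem_nhds hε)] with n hn
  refine convexOn_logGammaSeq_sub (convex_Icc 1 M) (fun t ht => one_pos.trans_le ht.1)
    fun t ⟨ht1, htM⟩ => ?_
  have hgap : (1 - 2 * a) / (M * (M + 1)) ≤ (t + 1)⁻¹ - a * t⁻¹ :=
    calc (1 - 2 * a) / (M * (M + 1)) ≤ (1 - 2 * a) / (t * (t + 1)) :=
          div_le_div_of_nonneg_left (by linarith) (by positivity) (by nlinarith)
      _ ≤ ((1 - a) * t - a) / (t * (t + 1)) :=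
          div_le_div_of_nonneg_right (by nlinarith) (by positivity)
      _ = (t + 1)⁻¹ - a * t⁻¹ := by field_simp; ring
  have htail : (t + n + 1)⁻¹ ≤ 1 / ((n : ℝ) + 1) := by
    rw [one_div]; exact inv_anti₀ (by positivity) (by linarith)
  linarith

end Real.BohrMollerup

namespace Real

local notation "γ" => eulerMascheroniConstant

theorem Gamma_le_one_of_mem_Icc {x : ℝ} (hx : x ∈ Icc 1 2) : Gamma x ≤ 1 := by
  have hconv : ConvexOn ℝ (Icc 1 2) Gamma :=
    convexOn_Gamma.subset (fun t ht => one_pos.trans_le ht.1) (convex_Icc 1 2)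
  simpa [Gamma_two] using
    hconv.le_max_of_mem_Icc (left_mem_Icc.2 one_le_two) (right_mem_Icc.2 one_le_two) hx

theorem Gamma_lt_rpow_sub_one {x : ℝ} (hx : 1 < x) : Gamma x < x ^ (x - 1) := by
  obtain ⟨n, hn⟩ := exists_nat_ge (x - 2)
  induction n generalizing x with
  | zero =>
    calc Gamma x ≤ 1 := Gamma_le_one_of_mem_Icc ⟨hx.le, by simpa [sub_nonpos] using hn⟩
      _ < x ^ (x - 1) := one_lt_rpow hx (by linarith)
  | succ n ih =>
    rcases le_or_gt x 2 with hx2 | hx2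
    · exact ih hx (by linarith [n.cast_nonneg (α := ℝ)])
    · have hx1 : 1 < x - 1 := by linarith
      calc Gamma x = (x - 1) * Gamma (x - 1) := by
            simpa using Gamma_add_one (s := x - 1) (by linarith)
        _ < (x - 1) * (x - 1) ^ (x - 1 - 1) :=
            mul_lt_mul_of_pos_left (ih hx1 (by push_cast at hn; linarith)) (by linarith)
        _ = (x - 1) ^ (x - 1) := by
            rw [← rpow_one_add' (by linarith) (by linarith)]; ring_nf
        _ < x ^ (x - 1) := rpow_lt_rpow (by linarith) (by linarith) (by linarith)

theorem mul_log_lt_log_Gamma {x : ℝ} (hx : 1 < x) :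
    ((1 - γ) * x - 1) * log x < log (Gamma x) := by
  set c := (2 * γ - 1) / (x * (x + 1))
  have hc : 0 < c := div_pos (by linarith [one_half_lt_eulerMascheroniConstant]) (by positivity)
  set G : ℝ → ℝ := fun t => log (Gamma t) - ((1 - γ) * t - 1) * log t - c / 4 * t ^ 2
  have hconv : ConvexOn ℝ (Icc 1 x) G :=
    BohrMollerup.convexOn_log_Gamma_sub (by linarith [one_half_lt_eulerMascheroniConstant])
      (by rw [show 1 - 2 * (1 - γ) = 2 * γ - 1 by ring]; linarith)
  have hderiv : HasDerivAt G (-(c / 2)) 1 := by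
    refine (((hasDerivAt_Gamma_one.log (by simp)).sub
      ((((hasDerivAt_id 1).const_mul (1 - γ)).sub_const 1).mul (hasDerivAt_log one_ne_zero))).sub
      ((hasDerivAt_pow 2 1).const_mul (c / 4))).congr_deriv ?_
    simp only [Gamma_one, div_one, mul_one, log_one, mul_zero, id_eq, sub_sub_cancel_left,
      inv_one, zero_add, sub_self, Nat.cast_ofNat, Nat.add_one_sub_one, one_pow, zero_sub]
    ring
  have hslope := hconv.le_slope_of_hasDerivAt (left_mem_Icc.2 hx.le) (right_mem_Icc.2 hx.le) hx
    hderiv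
  rw [slope_def_field, le_div_iff₀ (sub_pos.2 hx)] at hslope
  simp only [G, Gamma_one, log_one, mul_zero, sub_zero] at hslope
  nlinarith [mul_pos hc (pow_pos (sub_pos.2 hx) 2)]

end Real

theorem gamma_rpow_bounds (x : ℝ) (hx : 1 < x) :
    x ^ ((1 - Real.eulerMascheroniConstant) * x - 1) < Real.Gamma x ∧
    Real.Gamma x < x ^ (x - 1) := by
  have hx0 : 0 < x := by linarith
  refine ⟨?_, Gamma_lt_rpow_sub_one hx⟩
  rw [← log_lt_log_iff (rpow_pos_of_pos hx0 _) (Gamma_pos_of_pos hx0), log_rpow hx0]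
  exact mul_log_lt_log_Gamma hx
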